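/- arXiv:cond-mat/0509689 — 2 statements merged into one kernel-verified Lean document; each statement's English description precedes it below -/
import Mathlib

section
/- The function f(x) = A_q (1 - β(q-1) xᵀC⁻¹x)^{1/(q-1)} on ℝⁿ, with n/(n+2) < q < 1, β = 1/(2q - n(1-q)), C symmetric positive definite, and A_q = Γ(1/(1-q)) (β(1-q))^{n/2} / (Γ(1/(1-q) - n/2) π^{n/2} |C|^{1/2}), is a probability density on ℝⁿ: it is nonnegative and integrates to 1. -/
/-!
With `p = 1/(1-q)` and `b = β(1-q)` the density is `A_q (1 + xᵀ(b C⁻¹)x)^{-p}`, a multivariate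
Student kernel. Factoring `b C⁻¹ = BᵀB`, the change of variables `y = Bx` reduces its integral to
`|det B|⁻¹ ∫ (1 + |y|²)^{-p} dy`; polar coordinates and the substitutions `u = r²`,
`u = t/(1-t)` turn the latter into Euler's Beta integral, which gives
`π^{n/2} Γ(p - n/2) / Γ(p)`, valid because `n/(n+2) < q` forces `β > 0` and `n/2 < p`.
The constant `A_q` is exactly the reciprocal of `∫ (1 + xᵀ(b C⁻¹)x)^{-p} dx`.
-/

open MeasureTheory Real Matrix Set Module

theorem integral_rpow_mul_one_sub_rpow_Ioo {a c : ℝ} (ha : 0 < a) (hc : 0 < c) :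
    ∫ t in Ioo (0 : ℝ) 1, t ^ (a - 1) * (1 - t) ^ (c - 1) = Gamma a * Gamma c / Gamma (a + c) := by
  have h := Complex.betaIntegral_eq_Gamma_mul_div a c (by simpa) (by simpa)
  rw [Complex.betaIntegral, intervalIntegral.integral_of_le zero_le_one,
    integral_Ioc_eq_integral_Ioo] at h
  have hreal : ∫ t in Ioo (0 : ℝ) 1, (t : ℂ) ^ ((a : ℂ) - 1) * (1 - (t : ℂ)) ^ ((c : ℂ) - 1) =
      ((∫ t in Ioo (0 : ℝ) 1, t ^ (a - 1) * (1 - t) ^ (c - 1) : ℝ) : ℂ) := by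
    rw [← integral_complex_ofReal]
    refine setIntegral_congr_fun measurableSet_Ioo fun t ht => ?_
    rw [Complex.ofReal_mul, Complex.ofReal_cpow ht.1.le, Complex.ofReal_cpow (sub_nonneg.2 ht.2.le)]
    push_cast
    rfl
  rw [hreal, ← Complex.ofReal_add, Complex.Gamma_ofReal, Complex.Gamma_ofReal,
    Complex.Gamma_ofReal] at h
  exact_mod_cast h

theorem image_div_one_sub_Ioo : (fun t : ℝ => t / (1 - t)) '' Ioo 0 1 = Ioi 0 := by
  ext u
  refine ⟨?_, fun (hu : 0 < u) => ⟨u / (1 + u), ?_, ?_⟩⟩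
  · rintro ⟨t, ⟨ht0, ht1⟩, rfl⟩
    exact div_pos ht0 (sub_pos.2 ht1)
  · exact ⟨by positivity, (div_lt_one (by positivity)).2 (by linarith)⟩
  · field_simp
    ring

theorem integral_rpow_mul_one_add_rpow_neg_Ioi {a p : ℝ} (ha : 0 < a) (hap : a < p) :
    ∫ u in Ioi (0 : ℝ), u ^ (a - 1) * (1 + u) ^ (-p) = Gamma a * Gamma (p - a) / Gamma p := by
  have hderiv : ∀ t ∈ Ioo (0 : ℝ) 1,
      HasDerivWithinAt (fun t => t / (1 - t)) ((1 - t) ^ 2)⁻¹ (Ioo 0 1) t := fun t ht => by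
    have h := (hasDerivAt_id t).div ((hasDerivAt_const t 1).sub (hasDerivAt_id t))
      (sub_pos.2 ht.2).ne'
    exact h.hasDerivWithinAt.congr_deriv (by simp)
  have hinj : InjOn (fun t : ℝ => t / (1 - t)) (Ioo 0 1) := fun s hs t ht hst => by
    have := (sub_pos.2 hs.2).ne'
    have := (sub_pos.2 ht.2).ne'
    field_simp at hst
    linarith
  have hbeta := integral_rpow_mul_one_sub_rpow_Ioo ha (sub_pos.2 hap)
  rw [add_sub_cancel] at hbeta
  rw [← image_div_one_sub_Ioo,
    integral_image_eq_integral_abs_deriv_smul measurableSet_Ioo hderiv hinj, ← hbeta]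
  refine setIntegral_congr_fun measurableSet_Ioo fun t ⟨ht0, ht1⟩ => ?_
  have hs : 0 < 1 - t := sub_pos.2 ht1
  have hbase : 1 + t / (1 - t) = (1 - t)⁻¹ := by field_simp; ring
  rw [smul_eq_mul, hbase, abs_of_pos (by positivity), div_rpow ht0.le hs.le, inv_rpow hs.le,
    ← rpow_neg hs.le, ← rpow_natCast, ← rpow_neg hs.le, neg_neg, div_eq_mul_inv, ← rpow_neg hs.le,
    show p - a - 1 = -(2 : ℕ) + -(a - 1) + p by push_cast; ring, rpow_add hs, rpow_add hs]
  ring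

theorem integral_rpow_mul_one_add_sq_rpow_neg_Ioi {s p : ℝ} (hs : 0 < s) (hsp : s / 2 < p) :
    ∫ r in Ioi (0 : ℝ), r ^ (s - 1) * (1 + r ^ 2) ^ (-p) =
      Gamma (s / 2) * Gamma (p - s / 2) / Gamma p / 2 := by
  have h := integral_comp_rpow_Ioi_of_pos (g := fun u => u ^ (s / 2 - 1) * (1 + u) ^ (-p)) two_pos
  rw [integral_rpow_mul_one_add_rpow_neg_Ioi (half_pos hs) hsp] at h
  rw [← h, ← integral_div]
  refine setIntegral_congr_fun measurableSet_Ioi fun r (hr : 0 < r) => ?_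
  rw [smul_eq_mul, ← rpow_mul hr.le, rpow_two, show s - 1 = (2 - 1) + 2 * (s / 2 - 1) by ring,
    rpow_add hr]
  ring

theorem integral_one_add_norm_sq_rpow_neg {E : Type*} [NormedAddCommGroup E]
    [InnerProductSpace ℝ E] [FiniteDimensional ℝ E] [MeasurableSpace E] [BorelSpace E]
    [Nontrivial E] {p : ℝ} (hp : (finrank ℝ E : ℝ) / 2 < p) :
    ∫ x : E, (1 + ‖x‖ ^ 2) ^ (-p) =
      π ^ ((finrank ℝ E : ℝ) / 2) * Gamma (p - finrank ℝ E / 2) / Gamma p := by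
  have hd : 0 < finrank ℝ E := finrank_pos
  have hradial : ∫ r in Ioi (0 : ℝ), r ^ (finrank ℝ E - 1) • (1 + r ^ 2) ^ (-p) =
      ∫ r in Ioi (0 : ℝ), r ^ ((finrank ℝ E : ℝ) - 1) * (1 + r ^ 2) ^ (-p) := by
    refine setIntegral_congr_fun measurableSet_Ioi fun r _ => ?_
    rw [smul_eq_mul, ← rpow_natCast, Nat.cast_sub hd, Nat.cast_one]
  have hpi : √π ^ finrank ℝ E = π ^ ((finrank ℝ E : ℝ) / 2) := by
    rw [sqrt_eq_rpow, ← rpow_mul_natCast pi_pos.le]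
    ring_nf
  have hGamma : Gamma ((finrank ℝ E : ℝ) / 2) ≠ 0 := (Gamma_pos_of_pos (by positivity)).ne'
  rw [integral_fun_norm_addHaar volume fun r => (1 + r ^ 2) ^ (-p), measureReal_def,
    InnerProductSpace.volume_ball, hradial,
    integral_rpow_mul_one_add_sq_rpow_neg_Ioi (by positivity) hp, ENNReal.ofReal_one, one_pow,
    one_mul, ENNReal.toReal_ofReal (by positivity), hpi, Gamma_add_one (by positivity),
    nsmul_eq_mul, smul_eq_mul]
  field_simp

theorem integral_one_add_dotProduct_self_rpow_neg {ι : Type*} [Fintype ι] {p : ℝ}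
    (hp : (Fintype.card ι : ℝ) / 2 < p) :
    ∫ x : ι → ℝ, (1 + x ⬝ᵥ x) ^ (-p) =
      π ^ ((Fintype.card ι : ℝ) / 2) * Gamma (p - Fintype.card ι / 2) / Gamma p := by
  cases isEmpty_or_nonempty ι
  · have : Gamma p ≠ 0 := (Gamma_pos_of_pos (by simpa using hp)).ne'
    simp [volume_pi, Measure.pi_of_empty _ (isEmptyElim : ι → ℝ), this]
  · rw [← (EuclideanSpace.volume_preserving_symm_measurableEquiv_toLp ι).integral_comp',
      ← finrank_euclideanSpace (𝕜 := ℝ), ← integral_one_add_norm_sq_rpow_neg (by simpa)]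
    refine integral_congr_ae (ae_of_all _ fun x => ?_)
    dsimp only
    rw [EuclideanSpace.real_norm_sq_eq]
    simp [dotProduct, sq]

theorem integral_comp_mulVec {ι F : Type*} [Fintype ι] [DecidableEq ι] [NormedAddCommGroup F]
    [NormedSpace ℝ F] {M : Matrix ι ι ℝ} (hM : M.det ≠ 0) (g : (ι → ℝ) → F) :
    ∫ x, g (M *ᵥ x) = |M.det|⁻¹ • ∫ y, g y := by
  have hemb : MeasurableEmbedding (toLin' M) :=
    (LinearMap.isClosedEmbedding_of_injective (LinearMap.ker_eq_bot.2
      (mulVec_injective_iff_isUnit.2 ((isUnit_iff_isUnit_det M).2 hM.isUnit)))).measurableEmbedding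
  rw [← abs_inv, ← ENNReal.toReal_ofReal (abs_nonneg M.det⁻¹), ← integral_smul_measure,
    ← Real.map_matrix_volume_pi_eq_smul_volume_pi hM, hemb.integral_map]
  rfl

open scoped MatrixOrder in
theorem Matrix.PosSemidef.exists_abs_det_eq_sqrt_det_and_dotProduct_mulVec_eq {ι : Type*}
    [Fintype ι] [DecidableEq ι] {A : Matrix ι ι ℝ} (hA : A.PosSemidef) :
    ∃ B : Matrix ι ι ℝ, |B.det| = √A.det ∧ ∀ x, x ⬝ᵥ A *ᵥ x = B *ᵥ x ⬝ᵥ B *ᵥ x := by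
  obtain ⟨B, rfl⟩ := CStarAlgebra.nonneg_iff_eq_star_mul_self.mp hA.nonneg
  refine ⟨B, ?_, fun x => ?_⟩
  · rw [det_mul, star_eq_conjTranspose, det_conjTranspose, star_trivial, sqrt_mul_self_eq_abs]
  · rw [← mulVec_mulVec, dotProduct_mulVec, star_eq_conjTranspose,
      conjTranspose_eq_transpose_of_trivial, vecMul_transpose]

theorem integral_one_add_dotProduct_mulVec_rpow_neg {ι : Type*} [Fintype ι] [DecidableEq ι]
    {A : Matrix ι ι ℝ} (hA : A.PosDef) {p : ℝ} (hp : (Fintype.card ι : ℝ) / 2 < p) :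
    ∫ x : ι → ℝ, (1 + x ⬝ᵥ A *ᵥ x) ^ (-p) =
      π ^ ((Fintype.card ι : ℝ) / 2) * Gamma (p - Fintype.card ι / 2) / (Gamma p * √A.det) := by
  obtain ⟨B, hBdet, hB⟩ := hA.posSemidef.exists_abs_det_eq_sqrt_det_and_dotProduct_mulVec_eq
  have hBdet_ne : B.det ≠ 0 := abs_pos.1 (hBdet ▸ sqrt_pos.2 hA.det_pos)
  simp_rw [hB]
  rw [integral_comp_mulVec hBdet_ne fun y => (1 + y ⬝ᵥ y) ^ (-p),
    integral_one_add_dotProduct_self_rpow_neg hp, hBdet, smul_eq_mul]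
  ring

theorem Matrix.sqrt_det_smul_inv {ι : Type*} [Fintype ι] [DecidableEq ι] (A : Matrix ι ι ℝ)
    {c : ℝ} (hc : 0 ≤ c) : √(c • A⁻¹).det = c ^ ((Fintype.card ι : ℝ) / 2) / √A.det := by
  rw [det_smul, det_nonsing_inv, Ring.inverse_eq_inv', sqrt_mul (by positivity), sqrt_inv,
    ← div_eq_mul_inv, sqrt_eq_rpow, ← rpow_natCast, ← rpow_mul hc]
  ring_nf

theorem tsallis_q_lt_one_is_density_general (n : ℕ) (q : ℝ)
    (hq1 : (n : ℝ) / (n + 2) < q) (hq2 : q < 1)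
    (C : Matrix (Fin n) (Fin n) ℝ) (hC : C.PosDef)
    (β Aq : ℝ)
    (hβ : β = 1 / (2 * q - n * (1 - q)))
    (hA : Aq = Real.Gamma (1 / (1 - q)) * (β * (1 - q)) ^ ((n : ℝ) / 2) /
        (Real.Gamma (1 / (1 - q) - n / 2) * Real.pi ^ ((n : ℝ) / 2) * Real.sqrt C.det)) :
    (∀ x : Fin n → ℝ,
        0 ≤ Aq * (1 - β * (q - 1) * (x ⬝ᵥ C⁻¹.mulVec x)) ^ (1 / (q - 1))) ∧
    ∫ x : Fin n → ℝ,
        Aq * (1 - β * (q - 1) * (x ⬝ᵥ C⁻¹.mulVec x)) ^ (1 / (q - 1)) = 1 := by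
  have h1q : 0 < 1 - q := sub_pos.2 hq2
  have hqn : (n : ℝ) < q * (n + 2) := (div_lt_iff₀ (by positivity)).1 hq1
  have hb : 0 < β * (1 - q) := hβ ▸ mul_pos (one_div_pos.2 (by linarith)) h1q
  have hpn : (n : ℝ) / 2 < 1 / (1 - q) := (div_lt_div_iff₀ two_pos h1q).2 (by linarith)
  set p := 1 / (1 - q) with hp
  have hbC : ((β * (1 - q)) • C⁻¹).PosDef := hC.inv.smul hb
  have hdensity : ∀ x, Aq * (1 - β * (q - 1) * (x ⬝ᵥ C⁻¹ *ᵥ x)) ^ (1 / (q - 1)) =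
      Aq * (1 + x ⬝ᵥ ((β * (1 - q)) • C⁻¹) *ᵥ x) ^ (-p) := fun x => by
    rw [smul_mulVec, dotProduct_smul, smul_eq_mul, hp, ← div_neg, neg_sub]
    ring_nf
  simp_rw [hdensity]
  have hGamma_p : 0 < Gamma p := Gamma_pos_of_pos ((by positivity : (0 : ℝ) ≤ n / 2).trans_lt hpn)
  have hGamma_pn : 0 < Gamma (p - n / 2) := Gamma_pos_of_pos (sub_pos.2 hpn)
  have hdetC : 0 < √C.det := sqrt_pos.2 hC.det_pos
  have hAq : 0 ≤ Aq := by
    rw [hA]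
    positivity
  refine ⟨fun x => mul_nonneg hAq (rpow_nonneg ?_ _), ?_⟩
  · exact add_nonneg zero_le_one (hbC.posSemidef.dotProduct_mulVec_nonneg x)
  · rw [integral_const_mul, integral_one_add_dotProduct_mulVec_rpow_neg hbC (by simpa using hpn),
      sqrt_det_smul_inv _ hb.le, hA, Fintype.card_fin]
    -- as an atom, `field_simp` cannot rewrite the argument `p - n / 2` into `(2 * p - n) / 2`
    set G := Gamma (p - n / 2)
    field_simp

/-- For `n/(n+2) < q < 1`, the Tsallis density
`f(x) = A_q (1 - β(q-1) xᵀC⁻¹x)^{1/(q-1)}` is a probability density on `ℝⁿ`: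
it is nonnegative and integrates to 1. -/
theorem tsallis_q_lt_one_is_density (n : ℕ) (hn : 1 ≤ n) (q : ℝ)
    (hq1 : (n : ℝ) / (n + 2) < q) (hq2 : q < 1)
    (C : Matrix (Fin n) (Fin n) ℝ) (hCsymm : C.IsSymm) (hC : C.PosDef)
    (β Aq : ℝ)
    (hβ : β = 1 / (2 * q - n * (1 - q)))
    (hA : Aq = Real.Gamma (1 / (1 - q)) * (β * (1 - q)) ^ ((n : ℝ) / 2) /
        (Real.Gamma (1 / (1 - q) - n / 2) * Real.pi ^ ((n : ℝ) / 2) * Real.sqrt C.det)) :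
    (∀ x : Fin n → ℝ,
        0 ≤ Aq * (1 - β * (q - 1) * (x ⬝ᵥ C⁻¹.mulVec x)) ^ (1 / (q - 1))) ∧
    ∫ x : Fin n → ℝ,
        Aq * (1 - β * (q - 1) * (x ⬝ᵥ C⁻¹.mulVec x)) ^ (1 / (q - 1)) = 1 :=
  tsallis_q_lt_one_is_density_general n q hq1 hq2 C hC β Aq hβ hA
end

section
/- Let N and E be such that N/|Λ| → ρ and E/|Λ| → e as |Λ| → ∞ with N₀ fixed. Then the densities ν_Λ(q₁,...,q_{N₀}) ∝ (E - Σ_{i=1}^{N₀}(1/2)m‖qᵢ‖²)_+^{(3/2)(N-N₀)-1}, suitably normalized, converge pointwise to the Maxwell–Boltzmann density proportional to exp(-(3ρ/(2e)) Σ_{i=1}^{N₀} (1/2)m‖qᵢ‖²). -/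
/-!
Writing `S` for the kinetic energy of the tagged particles and `α = (3/2)(N - N₀) - 1`, the
density is `E^α (1 - S/E)₊^α`, and the factor `E^α` cancels against the normalization. Since
`α/E → β = 3ρ/(2e)`, the profile `(1 - S/E)₊^α = ((1 - S/E)^E)^(α/E)` tends to `exp(-βS)`, and
`(1 - s)₊ ≤ exp(-s)` bounds it by the integrable Gaussian `exp(-(β/2)S)` for large `Λ`, so
dominated convergence gives convergence of the normalizing integrals as well.
-/

open MeasureTheory Real Filter Topology

lemma integrable_exp_neg_sum_mul_sq {ι : Type*} [Fintype ι] {a : ι → ℝ} (ha : ∀ i, 0 < a i) :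
    Integrable (fun x : ι → ℝ => exp (-∑ i, a i * x i ^ 2)) := by
  simp_rw [← Finset.sum_neg_distrib, exp_sum]
  exact Integrable.fintype_prod fun i => by
    simpa only [neg_mul] using integrable_exp_neg_mul_sq (ha i)

lemma max_zero_one_sub_rpow_le_exp {α : ℝ} (hα : 0 ≤ α) (x : ℝ) :
    max 0 (1 - x) ^ α ≤ exp (-(α * x)) :=
  calc max 0 (1 - x) ^ α
      ≤ exp (-x) ^ α := by
        gcongr
        exact max_le (exp_pos _).le (by linarith [add_one_le_exp (-x)])
    _ = exp (-(α * x)) := by rw [← exp_mul]; ring_nf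

lemma max_zero_sub_rpow_eq_mul {E : ℝ} (hE : 0 < E) (s α : ℝ) :
    max 0 (E - s) ^ α = E ^ α * max 0 (1 - s / E) ^ α := by
  rw [← mul_rpow hE.le (le_max_left _ _), mul_max_of_nonneg _ _ hE.le, mul_zero, mul_one_sub,
    mul_div_cancel₀ _ hE.ne']

section Limits

variable {ι : Type*} {l : Filter ι}

lemma tendsto_div_of_tendsto_div_of_tendsto_div {a b Λ : ι → ℝ} {x y : ℝ}
    (ha : Tendsto (fun j => a j / Λ j) l (𝓝 x)) (hb : Tendsto (fun j => b j / Λ j) l (𝓝 y))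
    (hy : y ≠ 0) (hΛ : ∀ᶠ j in l, Λ j ≠ 0) :
    Tendsto (fun j => a j / b j) l (𝓝 (x / y)) :=
  (ha.div hb hy).congr' <| hΛ.mono fun _ hj => div_div_div_cancel_right₀ hj _ _

variable {E α : ι → ℝ} {β : ℝ}

lemma tendsto_max_zero_one_sub_div_rpow (hE : Tendsto E l atTop)
    (hαE : Tendsto (fun j => α j / E j) l (𝓝 β)) (t : ℝ) :
    Tendsto (fun j => max 0 (1 - t / E j) ^ α j) l (𝓝 (exp (-(β * t)))) := by
  have hlim : Tendsto (fun j => ((1 + -t / E j) ^ E j) ^ (α j / E j)) l (𝓝 (exp (-t) ^ β)) :=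
    ((tendsto_one_add_div_rpow_exp (-t)).comp hE).rpow hαE (Or.inl (exp_pos _).ne')
  rw [← exp_mul, mul_comm, ← neg_mul_eq_mul_neg] at hlim
  refine hlim.congr' ?_
  filter_upwards [hE.eventually_gt_atTop 0, hE.eventually_gt_atTop t] with j hEj htE
  have hbase : 0 ≤ 1 - t / E j := by
    rw [sub_nonneg, div_le_one hEj]
    exact htE.le
  rw [neg_div, ← sub_eq_add_neg, max_eq_right hbase, ← rpow_mul hbase, mul_div_cancel₀ _ hEj.ne']

lemma tendsto_integral_max_zero_one_sub_div_rpow [l.IsCountablyGenerated] {X : Type*}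
    [MeasurableSpace X] {μ : Measure X} {S : X → ℝ} (hS : Measurable S) (hS0 : ∀ y, 0 ≤ S y)
    {c : ℝ} (hc : 0 ≤ c) (hcβ : c < β) (hint : Integrable (fun y => exp (-(c * S y))) μ)
    (hE : Tendsto E l atTop) (hαE : Tendsto (fun j => α j / E j) l (𝓝 β)) :
    Tendsto (fun j => ∫ y, max 0 (1 - S y / E j) ^ α j ∂μ) l (𝓝 (∫ y, exp (-(β * S y)) ∂μ)) := by
  refine tendsto_integral_filter_of_dominated_convergence _ ?_ ?_ hint
    (ae_of_all _ fun y => tendsto_max_zero_one_sub_div_rpow hE hαE (S y))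
  · exact Eventually.of_forall fun j =>
      ((measurable_const.max (measurable_const.sub (hS.div_const _))).pow_const _).aestronglyMeasurable
  · filter_upwards [hαE.eventually_const_lt hcβ, hE.eventually_gt_atTop 0] with j hcj hEj
    have hα : 0 ≤ α j := by
      simpa [div_mul_cancel₀ _ hEj.ne'] using (mul_pos (hc.trans_lt hcj) hEj).le
    refine ae_of_all _ fun y => ?_
    rw [norm_of_nonneg (rpow_nonneg (le_max_left _ _) _)]
    calc max 0 (1 - S y / E j) ^ α j
        ≤ exp (-(α j * (S y / E j))) := max_zero_one_sub_rpow_le_exp hα _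
      _ ≤ exp (-(c * S y)) := by
        rw [exp_le_exp, neg_le_neg_iff, ← mul_div_assoc, mul_div_right_comm]
        exact mul_le_mul_of_nonneg_right hcj.le (hS0 y)

end Limits

theorem thermodynamic_limit_boltzmann_general (N₀ : ℕ) (m ρ e : ℝ)
    (hm : 0 < m) (hρ : 0 < ρ) (he : 0 < e)
    (Λ : ℕ → ℝ) (Nseq : ℕ → ℕ) (Eseq : ℕ → ℝ)
    (hΛ : Tendsto Λ atTop atTop)
    (hNΛ : Tendsto (fun j => (Nseq j : ℝ) / Λ j) atTop (nhds ρ))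
    (hEΛ : Tendsto (fun j => Eseq j / Λ j) atTop (nhds e))
    (ν : ℕ → (Fin (3 * N₀) → ℝ) → ℝ)
    (hν : ν = fun j x =>
      (max 0 (Eseq j - ∑ i, (m / 2) * x i ^ 2)) ^ ((3 / 2 : ℝ) * ((Nseq j : ℝ) - N₀) - 1)) :
    ∀ x : Fin (3 * N₀) → ℝ,
      Tendsto (fun j => ν j x / ∫ y : Fin (3 * N₀) → ℝ, ν j y) atTop
        (nhds (Real.exp (-(3 * ρ / (2 * e)) * ∑ i, (m / 2) * x i ^ 2) /
          ∫ y : Fin (3 * N₀) → ℝ, Real.exp (-(3 * ρ / (2 * e)) * ∑ i, (m / 2) * y i ^ 2))) := by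
  intro x
  set S : (Fin (3 * N₀) → ℝ) → ℝ := fun y => ∑ i, (m / 2) * y i ^ 2 with hS
  set β := 3 * ρ / (2 * e)
  set α : ℕ → ℝ := fun j => 3 / 2 * ((Nseq j : ℝ) - N₀) - 1
  have hβ : 0 < β := by positivity
  have hE : Tendsto Eseq atTop atTop := (hEΛ.pos_mul_atTop he hΛ).congr'
    ((hΛ.eventually_gt_atTop 0).mono fun j hj => div_mul_cancel₀ _ hj.ne')
  have hαE : Tendsto (fun j => α j / Eseq j) atTop (𝓝 β) := by
    have hαΛ : Tendsto (fun j => α j / Λ j) atTop (𝓝 (3 / 2 * ρ)) := by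
      have := (hNΛ.const_mul (3 / 2)).sub
        ((tendsto_inv_atTop_zero.comp hΛ).const_mul (3 / 2 * (N₀ : ℝ) + 1))
      rw [mul_zero, sub_zero] at this
      refine this.congr fun j => ?_
      simp only [α, Function.comp_apply]
      ring
    convert tendsto_div_of_tendsto_div_of_tendsto_div hαΛ hEΛ he.ne' (hΛ.eventually_ne_atTop 0)
      using 2
    ring
  have hgauss : ∀ c > 0, Integrable (fun y => exp (-(c * S y))) := fun c hc => by
    simpa only [hS, Finset.mul_sum, mul_assoc] using
      integrable_exp_neg_sum_mul_sq (ι := Fin (3 * N₀)) (a := fun _ => c * (m / 2))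
        fun _ => by positivity
  have hS_meas : Measurable S := by fun_prop
  have hlim := (tendsto_max_zero_one_sub_div_rpow hE hαE (S x)).div
    (tendsto_integral_max_zero_one_sub_div_rpow hS_meas
      (fun y => Finset.sum_nonneg fun i _ => by positivity) (half_pos hβ).le (half_lt_self hβ)
      (hgauss _ (half_pos hβ)) hE hαE)
    (integral_exp_pos (hgauss β hβ)).ne'
  simp_rw [neg_mul]
  refine hlim.congr' ?_
  filter_upwards [hE.eventually_gt_atTop 0] with j hEj
  simp_rw [hν, max_zero_sub_rpow_eq_mul hEj]
  rw [integral_const_mul, mul_div_mul_left _ _ (rpow_pos_of_pos hEj _).ne']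
  rfl

/-- Thermodynamic limit: with `N/|Λ| → ρ > 0` and `E/|Λ| → e > 0` as `|Λ| → ∞`
(`N₀` fixed), the normalized microcanonical marginal densities
`ν_Λ ∝ (E - Σ_{i≤N₀}(m/2)‖qᵢ‖²)₊^{(3/2)(N-N₀)-1}` converge pointwise to the
Maxwell–Boltzmann density proportional to `exp(-(3ρ/(2e)) Σ_{i≤N₀}(m/2)‖qᵢ‖²)`. -/
theorem thermodynamic_limit_boltzmann (N₀ : ℕ) (hN₀ : 1 ≤ N₀) (m ρ e : ℝ)
    (hm : 0 < m) (hρ : 0 < ρ) (he : 0 < e)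
    (Λ : ℕ → ℝ) (Nseq : ℕ → ℕ) (Eseq : ℕ → ℝ)
    (hΛ : Tendsto Λ atTop atTop)
    (hNΛ : Tendsto (fun j => (Nseq j : ℝ) / Λ j) atTop (nhds ρ))
    (hEΛ : Tendsto (fun j => Eseq j / Λ j) atTop (nhds e))
    (hN : ∀ j, N₀ < Nseq j)
    (ν : ℕ → (Fin (3 * N₀) → ℝ) → ℝ)
    (hν : ν = fun j x =>
      (max 0 (Eseq j - ∑ i, (m / 2) * x i ^ 2)) ^ ((3 / 2 : ℝ) * ((Nseq j : ℝ) - N₀) - 1)) :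
    ∀ x : Fin (3 * N₀) → ℝ,
      Tendsto (fun j => ν j x / ∫ y : Fin (3 * N₀) → ℝ, ν j y) atTop
        (nhds (Real.exp (-(3 * ρ / (2 * e)) * ∑ i, (m / 2) * x i ^ 2) /
          ∫ y : Fin (3 * N₀) → ℝ, Real.exp (-(3 * ρ / (2 * e)) * ∑ i, (m / 2) * y i ^ 2))) :=
  thermodynamic_limit_boltzmann_general N₀ m ρ e hm hρ he Λ Nseq Eseq hΛ hNΛ hEΛ ν hν
end
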